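/- arXiv:1304.1299 — 3 statements merged into one kernel-verified Lean document; each statement's English description precedes it below -/
import Mathlib

section
/- Let N ≥ 2 and let Λ = ℤ^N with the symmetric bilinear form determined on the standard basis v_1, …, v_N by: v_i · v_i = c_i with c_i ≥ 2 for all i; v_i · v_j = -1 if |i - j| = 1 and {i,j} ≠ {1,N}; v_1 · v_N = 1; and v_i · v_j = 0 otherwise. Then this bilinear form is positive definite. -/
open Matrix
open Finset


/-- Quadratic "difference" terms. -/
def ee (N : ℕ) (x : Fin N → ℤ) (i : Fin N) : ℤ :=
  if h : (i : ℕ) + 1 < N then (x i - x ⟨(i : ℕ) + 1, h⟩) ^ 2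
  else (x i + x ⟨0, i.pos⟩) ^ 2

lemma ee_nonneg (N : ℕ) (x : Fin N → ℤ) (i : Fin N) : 0 ≤ ee N x i := by
  unfold ee; split <;> positivity

lemma ee_all_zero (N : ℕ) (x : Fin N → ℤ) (h0 : ∀ i, ee N x i = 0) (hN : 0 < N) :
    x = 0 := by
  have hstep : ∀ k (hk1 : k + 1 < N), x ⟨k, by omega⟩ = x ⟨k + 1, hk1⟩ := by
    intro k hk1
    have h := h0 ⟨k, by omega⟩
    unfold ee at h
    rw [dif_pos (show k + 1 < N from hk1)] at h
    have := sq_eq_zero_iff.mp h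
    linarith
  have hconst : ∀ k (hk : k < N), x ⟨k, hk⟩ = x ⟨0, hN⟩ := by
    intro k
    induction k with
    | zero => intro _; rfl
    | succ n ih => intro hk; rw [← hstep n hk]; exact ih (by omega)
  have hL := h0 ⟨N - 1, by omega⟩
  unfold ee at hL
  rw [dif_neg (by simp; omega)] at hL
  have h2 : x ⟨N - 1, by omega⟩ + x ⟨0, hN⟩ = 0 := by
    have := sq_eq_zero_iff.mp hL
    convert this using 3
  have h3 : x ⟨0, hN⟩ = 0 := by
    have := hconst (N - 1) (by omega); linarith
  funext i
  have : x i = x ⟨(i : ℕ), i.isLt⟩ := by congr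
  rw [this, hconst _ i.isLt, h3]; rfl

lemma key (N : ℕ) (hN : 3 ≤ N) (c : Fin N → ℤ)
    (Q : Matrix (Fin N) (Fin N) ℤ)
    (hQ : ∀ i j : Fin N, Q i j =
      if i = j then c i
      else if ((i : ℕ) + 1 = j ∨ (j : ℕ) + 1 = i) ∧
          ¬((i : ℕ) = 0 ∧ (j : ℕ) = N - 1) ∧ ¬((j : ℕ) = 0 ∧ (i : ℕ) = N - 1) then -1
      else if ((i : ℕ) = 0 ∧ (j : ℕ) = N - 1) ∨ ((j : ℕ) = 0 ∧ (i : ℕ) = N - 1) then 1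
      else 0) (x : Fin N → ℤ) :
    x ⬝ᵥ Q.mulVec x = (∑ i, (c i - 2) * x i ^ 2) + ∑ i, ee N x i := by
  have hN0 : 0 < N := by omega
  haveI : NeZero N := ⟨by omega⟩
  set Z : Fin N := ⟨0, hN0⟩ with hZ
  set L : Fin N := ⟨N - 1, by omega⟩ with hL
  -- split Q into pieces
  have hsplit : ∀ i j : Fin N, x i * Q i j * x j =
      (if i = j then c i * x i * x j else 0)
      + (if (i : ℕ) + 1 = (j : ℕ) then -(x i * x j) else 0)
      + (if (j : ℕ) + 1 = (i : ℕ) then -(x i * x j) else 0)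
      + (if (i : ℕ) = 0 ∧ (j : ℕ) = N - 1 then x i * x j else 0)
      + (if (j : ℕ) = 0 ∧ (i : ℕ) = N - 1 then x i * x j else 0) := by
    intro i j
    have hi := i.isLt; have hj := j.isLt
    rw [hQ]
    simp only [Fin.ext_iff]
    split_ifs <;> first | ring1 | (exfalso; omega)
  have expand : x ⬝ᵥ Q.mulVec x = ∑ i, ∑ j, x i * Q i j * x j := by
    simp [dotProduct, Matrix.mulVec, Finset.mul_sum, mul_assoc]
  rw [expand]
  simp only [hsplit, Finset.sum_add_distrib]
  -- the diagonal term
  have hdiag : (∑ i : Fin N, ∑ j : Fin N, if i = j then c i * x i * x j else 0)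
      = ∑ i, c i * x i ^ 2 := by
    refine Finset.sum_congr rfl fun i _ => ?_
    rw [Finset.sum_ite_eq (Finset.univ) i (fun j => c i * x i * x j)]
    simp [sq]; ring
  -- superdiagonal
  have hg : ∀ i : Fin N, (∑ j : Fin N, if (i : ℕ) + 1 = (j : ℕ) then -(x i * x j) else 0)
      = -(if h : (i : ℕ) + 1 < N then x i * x ⟨(i : ℕ) + 1, h⟩ else 0) := by
    intro i
    by_cases h : (i : ℕ) + 1 < N
    · have hc : ∀ j : Fin N, ((i : ℕ) + 1 = (j : ℕ)) ↔ j = ⟨(i : ℕ) + 1, h⟩ := by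
        intro j; rw [Fin.ext_iff]; exact eq_comm
      simp only [hc]
      rw [Finset.sum_ite_eq' Finset.univ (⟨(i : ℕ) + 1, h⟩ : Fin N) (fun j => -(x i * x j))]
      simp [h]
    · have hc : ∀ j : Fin N, ¬ ((i : ℕ) + 1 = (j : ℕ)) := fun j => by have := j.isLt; omega
      simp [hc, h]
  -- subdiagonal via symmetry
  have hsub : (∑ i : Fin N, ∑ j : Fin N, if (j : ℕ) + 1 = (i : ℕ) then -(x i * x j) else 0)
      = ∑ i : Fin N, -(if h : (i : ℕ) + 1 < N then x i * x ⟨(i : ℕ) + 1, h⟩ else 0) := by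
    rw [Finset.sum_comm]
    refine Finset.sum_congr rfl fun i _ => ?_
    rw [← hg i]
    refine Finset.sum_congr rfl fun j _ => ?_
    rw [mul_comm]
  have hsup : (∑ i : Fin N, ∑ j : Fin N, if (i : ℕ) + 1 = (j : ℕ) then -(x i * x j) else 0)
      = ∑ i : Fin N, -(if h : (i : ℕ) + 1 < N then x i * x ⟨(i : ℕ) + 1, h⟩ else 0) :=
    Finset.sum_congr rfl fun i _ => hg i
  -- corners
  have hcor1 : (∑ i : Fin N, ∑ j : Fin N, if (i : ℕ) = 0 ∧ (j : ℕ) = N - 1 then x i * x j else 0)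
      = x Z * x L := by
    have hc : ∀ i j : Fin N, ((i : ℕ) = 0 ∧ (j : ℕ) = N - 1) ↔ (i = Z ∧ j = L) := by
      intro i j; rw [hZ, hL, Fin.ext_iff, Fin.ext_iff]
    have h1 : ∀ i : Fin N, (∑ j : Fin N, if i = Z ∧ j = L then x i * x j else 0)
        = if i = Z then x i * x L else 0 := by
      intro i
      by_cases hi : i = Z
      · simp [hi, Finset.sum_ite_eq' Finset.univ L]
      · simp [hi]
    simp only [hc]
    rw [Finset.sum_congr rfl fun i _ => h1 i,
      Finset.sum_ite_eq' Finset.univ Z (fun i => x i * x L)]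
    simp
  have hcor2 : (∑ i : Fin N, ∑ j : Fin N, if (j : ℕ) = 0 ∧ (i : ℕ) = N - 1 then x i * x j else 0)
      = x Z * x L := by
    have hc : ∀ i j : Fin N, ((j : ℕ) = 0 ∧ (i : ℕ) = N - 1) ↔ (i = L ∧ j = Z) := by
      intro i j; rw [hZ, hL, Fin.ext_iff, Fin.ext_iff]; tauto
    have h1 : ∀ i : Fin N, (∑ j : Fin N, if i = L ∧ j = Z then x i * x j else 0)
        = if i = L then x i * x Z else 0 := by
      intro i
      by_cases hi : i = L
      · simp [hi, Finset.sum_ite_eq' Finset.univ Z]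
      · simp [hi]
    simp only [hc]
    rw [Finset.sum_congr rfl fun i _ => h1 i,
      Finset.sum_ite_eq' Finset.univ L (fun i => x i * x Z)]
    simp [mul_comm]
  rw [hdiag, hsub, hsup, hcor1, hcor2]
  -- now the pure quadratic identity
  have hx0 : ∀ (p : 0 < N), x ⟨0, p⟩ = x Z := fun p => rfl
  have hval1 : ((1 : Fin N) : ℕ) = 1 := by
    rw [Fin.val_one']
    exact Nat.mod_eq_of_lt (by omega)
  have hrot : ∀ i : Fin N, ee N x i =
      x i ^ 2 + x (i + 1) ^ 2
        - 2 * (if h : (i : ℕ) + 1 < N then x i * x ⟨(i : ℕ) + 1, h⟩ else 0)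
        + (if (i : ℕ) = N - 1 then 2 * (x L * x Z) else 0) := by
    intro i
    by_cases h : (i : ℕ) + 1 < N
    · have h1 : (i + 1 : Fin N) = ⟨(i : ℕ) + 1, h⟩ := by
        apply Fin.ext
        rw [Fin.val_add, hval1]
        exact Nat.mod_eq_of_lt h
      have h2 : ¬ ((i : ℕ) = N - 1) := by omega
      rw [if_neg h2]
      unfold ee
      rw [dif_pos h, dif_pos h, h1]
      ring
    · have h2 : (i : ℕ) = N - 1 := by have := i.isLt; omega
      have h3 : i = L := by apply Fin.ext; rw [hL]; exact h2
      have h1 : (i + 1 : Fin N) = Z := by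
        apply Fin.ext
        rw [Fin.val_add, hval1, h2]
        have hZv : (Z : ℕ) = 0 := rfl
        rw [hZv]
        have hh : N - 1 + 1 = N := by omega
        rw [hh, Nat.mod_self]
      rw [if_pos h2]
      unfold ee
      rw [dif_neg h, dif_neg h, h1, hx0, h3]
      ring
  have hshift : (∑ i : Fin N, x (i + 1) ^ 2) = ∑ i : Fin N, x i ^ 2 :=
    Equiv.sum_comp (Equiv.addRight (1 : Fin N)) (fun j => x j ^ 2)
  have hind : (∑ i : Fin N, if (i : ℕ) = N - 1 then 2 * (x L * x Z) else 0)
      = 2 * (x L * x Z) := by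
    have hc : ∀ i : Fin N, ((i : ℕ) = N - 1) ↔ i = L := by
      intro i; rw [hL, Fin.ext_iff]
    simp only [hc]
    rw [Finset.sum_ite_eq' Finset.univ L (fun _ => 2 * (x L * x Z))]
    simp
  have hee : (∑ i, ee N x i) =
      (∑ i : Fin N, x i ^ 2) + (∑ i : Fin N, x i ^ 2)
        - 2 * (∑ i : Fin N, (if h : (i : ℕ) + 1 < N then x i * x ⟨(i : ℕ) + 1, h⟩ else 0))
        + 2 * (x L * x Z) := by
    rw [Finset.sum_congr rfl fun i _ => hrot i]
    rw [Finset.sum_add_distrib, Finset.sum_sub_distrib, Finset.sum_add_distrib,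
      hshift, hind, Finset.mul_sum]
  have hc2 : (∑ i, (c i - 2) * x i ^ 2)
      = (∑ i, c i * x i ^ 2) - 2 * ∑ i, x i ^ 2 := by
    rw [Finset.mul_sum, ← Finset.sum_sub_distrib]
    exact Finset.sum_congr rfl fun i _ => by ring
  rw [hee, hc2, Finset.sum_neg_distrib]
  ring1


/-- The "circular plumbing" bilinear form on `ℤ^N` with diagonal entries
`c i ≥ 2`, `v_i · v_{i+1} = -1`, `v_1 · v_N = 1` and all other products `0`
is positive definite. -/
theorem stmt5 (N : ℕ) (hN : 2 ≤ N) (c : Fin N → ℤ) (hc : ∀ i, 2 ≤ c i)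
    (Q : Matrix (Fin N) (Fin N) ℤ)
    (hQ : ∀ i j : Fin N, Q i j =
      if i = j then c i
      else if ((i : ℕ) + 1 = j ∨ (j : ℕ) + 1 = i) ∧
          ¬((i : ℕ) = 0 ∧ (j : ℕ) = N - 1) ∧ ¬((j : ℕ) = 0 ∧ (i : ℕ) = N - 1) then -1
      else if ((i : ℕ) = 0 ∧ (j : ℕ) = N - 1) ∨ ((j : ℕ) = 0 ∧ (i : ℕ) = N - 1) then 1
      else 0) :
    ∀ x : Fin N → ℤ, x ≠ 0 → 0 < x ⬝ᵥ Q.mulVec x := by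
  intro x hx
  rcases eq_or_lt_of_le hN with h2 | h3
  · -- N = 2
    subst h2
    have e00 := hQ 0 0
    have e01 := hQ 0 1
    have e10 := hQ 1 0
    have e11 := hQ 1 1
    norm_num at e00 e01 e10 e11
    have hxx : x 0 ≠ 0 ∨ x 1 ≠ 0 := by
      by_contra h
      push_neg at h
      apply hx
      funext i
      fin_cases i <;> simp [h.1, h.2]
    have hval : x ⬝ᵥ Q.mulVec x
        = c 0 * x 0 ^ 2 + c 1 * x 1 ^ 2 + 2 * (x 0 * x 1) := by
      simp [dotProduct, Matrix.mulVec, Fin.sum_univ_two, e00, e01, e10, e11]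
      ring
    rw [hval]
    have hc0 := hc 0
    have hc1 := hc 1
    have h1 : (1 : ℤ) ≤ x 0 ^ 2 ∨ (1 : ℤ) ≤ x 1 ^ 2 := by
      rcases hxx with h | h
      · left; rcases lt_or_gt_of_ne h with h' | h' <;> nlinarith
      · right; rcases lt_or_gt_of_ne h with h' | h' <;> nlinarith
    rcases h1 with h | h <;>
      nlinarith [sq_nonneg (x 0 + x 1), sq_nonneg (x 0), sq_nonneg (x 1)]
  · -- 3 ≤ N
    have hN3 : 3 ≤ N := h3
    rw [key N hN3 c Q hQ x]
    have h1 : 0 ≤ ∑ i, (c i - 2) * x i ^ 2 :=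
      Finset.sum_nonneg fun i _ => by
        have := hc i
        have := sq_nonneg (x i)
        nlinarith
    have h2 : 0 < ∑ i, ee N x i := by
      obtain ⟨j, hj⟩ : ∃ j, ee N x j ≠ 0 := by
        by_contra h
        push_neg at h
        exact hx (ee_all_zero N x h (by omega))
      refine Finset.sum_pos' (fun i _ => ee_nonneg N x i) ⟨j, Finset.mem_univ j, ?_⟩
      exact lt_of_le_of_ne (ee_nonneg N x j) (Ne.symm hj)
    linarith
end

section
/- Let N ≥ 2, c_1, …, c_N ≥ 2 integers, and let Q be the symmetric N×N integer matrix with Q_{ii} = c_i, Q_{i,i+1} = Q_{i+1,i} = -1 for 1 ≤ i ≤ N-1, Q_{1,N} = Q_{N,1} = 1 (when N > 2), and all other entries zero. Then for every nonzero x ∈ ℤ^N, x^T Q x ≥ 2. -/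
open Matrix

/-- Matrix form: with `Q_{ii} = c_i ≥ 2`, `Q_{i,i+1} = Q_{i+1,i} = -1`,
`Q_{1,N} = Q_{N,1} = 1` when `N > 2`, and all other entries `0`, every
nonzero integer vector `x` satisfies `xᵀ Q x ≥ 2`. -/
theorem stmt6 (N : ℕ) (hN : 2 ≤ N) (c : Fin N → ℤ) (hc : ∀ i, 2 ≤ c i)
    (Q : Matrix (Fin N) (Fin N) ℤ)
    (hQ : ∀ i j : Fin N, Q i j =
      if i = j then c i
      else if (i : ℕ) + 1 = j ∨ (j : ℕ) + 1 = i then -1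
      else if 2 < N ∧ (((i : ℕ) = 0 ∧ (j : ℕ) = N - 1) ∨
          ((j : ℕ) = 0 ∧ (i : ℕ) = N - 1)) then 1
      else 0) :
    ∀ x : Fin N → ℤ, x ≠ 0 → 2 ≤ x ⬝ᵥ Q.mulVec x := by
  classical
  intro x hx
  open Finset in
  set y : ℕ → ℤ := fun n => if h : n < N then x ⟨n, h⟩ else 0 with hy
  set d : ℕ → ℤ := fun n => if h : n < N then c ⟨n, h⟩ else 2 with hd
  set q : ℕ → ℕ → ℤ := fun i j =>
    if i = j then d i
    else if i + 1 = j ∨ j + 1 = i then -1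
    else if 2 < N ∧ ((i = 0 ∧ j = N - 1) ∨ (j = 0 ∧ i = N - 1)) then 1
    else 0 with hq
  have hyN : ∀ n, N ≤ n → y n = 0 := by
    intro n hn; simp [hy, Nat.not_lt.mpr hn]
  -- Step 1: convert to a double sum over ℕ
  have h1 : x ⬝ᵥ Q.mulVec x = ∑ i ∈ range N, ∑ j ∈ range N, y i * (q i j * y j) := by
    have hqQ : ∀ i j : Fin N, Q i j = q (i : ℕ) (j : ℕ) := by
      intro i j
      rw [hQ, hq]
      simp only [hd, i.isLt, dif_pos, Fin.ext_iff]
    have hyx : ∀ i : Fin N, y (i : ℕ) = x i := by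
      intro i; simp [hy, i.isLt]
    have step : ∀ i : Fin N, x i * (Q.mulVec x) i
        = y (i : ℕ) * ∑ j ∈ range N, q (i : ℕ) j * y j := by
      intro i
      rw [Matrix.mulVec, dotProduct, hyx]
      congr 1
      rw [← Fin.sum_univ_eq_sum_range (fun j => q (i : ℕ) j * y j)]
      exact Finset.sum_congr rfl fun j _ => by rw [hqQ, hyx]
    calc x ⬝ᵥ Q.mulVec x = ∑ i : Fin N, x i * (Q.mulVec x) i := rfl
      _ = ∑ i : Fin N, y (i:ℕ) * ∑ j ∈ range N, q (i:ℕ) j * y j :=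
          Finset.sum_congr rfl fun i _ => step i
      _ = ∑ i ∈ range N, y i * ∑ j ∈ range N, q i j * y j :=
          Fin.sum_univ_eq_sum_range (fun n => y n * ∑ j ∈ range N, q n j * y j) N
      _ = ∑ i ∈ range N, ∑ j ∈ range N, y i * (q i j * y j) :=
          Finset.sum_congr rfl fun i _ => Finset.mul_sum _ _ _
  -- Step 2: evaluate the double sum
  have key : x ⬝ᵥ Q.mulVec x = (∑ i ∈ range N, d i * (y i * y i))
      - 2 * ∑ i ∈ range (N-1), y i * y (i+1)
      + (if 2 < N then 2 * (y 0 * y (N-1)) else 0) := by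
    rw [h1]
    have split : ∀ i j : ℕ, y i * (q i j * y j) =
        ((if i = j then d i * (y i * y j) else 0)
        + (if i + 1 = j then -(y i * y j) else 0))
        + ((if j + 1 = i then -(y i * y j) else 0)
        + ((if 2 < N ∧ i = 0 ∧ j = N - 1 then y i * y j else 0)
        + (if 2 < N ∧ j = 0 ∧ i = N - 1 then y i * y j else 0))) := by
      intro i j
      simp only [hq]
      split_ifs <;> first | ring1 | (exfalso; omega)
    simp only [split, Finset.sum_add_distrib]
    have T1 : ∑ i ∈ range N, ∑ j ∈ range N, (if i = j then d i * (y i * y j) else 0)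
        = ∑ i ∈ range N, d i * (y i * y i) := by
      refine Finset.sum_congr rfl fun i hi => ?_
      rw [Finset.sum_ite_eq (range N) i (fun j => d i * (y i * y j)), if_pos hi]
    have adj : ∑ i ∈ range N, y i * y (i+1) = ∑ i ∈ range (N-1), y i * y (i+1) := by
      have h : N = (N - 1) + 1 := by omega
      rw [h, Finset.sum_range_succ, ← h, hyN N le_rfl]
      ring
    have T2 : ∑ i ∈ range N, ∑ j ∈ range N, (if i + 1 = j then -(y i * y j) else 0)
        = -∑ i ∈ range (N-1), y i * y (i+1) := by
      rw [← adj, ← Finset.sum_neg_distrib]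
      refine Finset.sum_congr rfl fun i hi => ?_
      rw [Finset.sum_ite_eq (range N) (i+1) (fun j => -(y i * y j))]
      split_ifs with h
      · rfl
      · rw [hyN (i+1) (by simpa using h)]; ring
    have T3 : ∑ i ∈ range N, ∑ j ∈ range N, (if j + 1 = i then -(y i * y j) else 0)
        = -∑ i ∈ range (N-1), y i * y (i+1) := by
      rw [Finset.sum_comm, ← adj, ← Finset.sum_neg_distrib]
      refine Finset.sum_congr rfl fun j hj => ?_
      rw [Finset.sum_ite_eq (range N) (j+1) (fun i => -(y i * y j))]
      split_ifs with h
      · ring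
      · rw [hyN (j+1) (by simpa using h)]; ring
    have hN1 : N - 1 ∈ range N := Finset.mem_range.mpr (by omega)
    have h0 : (0 : ℕ) ∈ range N := Finset.mem_range.mpr (by omega)
    have T4 : ∑ i ∈ range N, ∑ j ∈ range N,
        (if 2 < N ∧ i = 0 ∧ j = N - 1 then y i * y j else 0)
        = (if 2 < N then y 0 * y (N-1) else 0) := by
      split_ifs with h2
      · have inner : ∀ i ∈ range N,
            (∑ j ∈ range N, if 2 < N ∧ i = 0 ∧ j = N - 1 then y i * y j else 0)
            = (if i = 0 then y 0 * y (N-1) else 0) := by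
          intro i _
          split_ifs with hi0
          · subst hi0
            simp only [h2, true_and]
            rw [Finset.sum_ite_eq' (range N) (N-1) (fun j => y 0 * y j), if_pos hN1]
          · exact Finset.sum_eq_zero fun j hj => by rw [if_neg (by tauto)]
        rw [Finset.sum_congr rfl inner,
          Finset.sum_ite_eq' (range N) 0 (fun _ => y 0 * y (N-1)), if_pos h0]
      · exact Finset.sum_eq_zero fun i _ => Finset.sum_eq_zero fun j _ => by
          rw [if_neg (by tauto)]
    have T5 : ∑ i ∈ range N, ∑ j ∈ range N,
        (if 2 < N ∧ j = 0 ∧ i = N - 1 then y i * y j else 0)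
        = (if 2 < N then y 0 * y (N-1) else 0) := by
      rw [Finset.sum_comm]
      split_ifs with h2
      · have inner : ∀ j ∈ range N,
            (∑ i ∈ range N, if 2 < N ∧ j = 0 ∧ i = N - 1 then y i * y j else 0)
            = (if j = 0 then y (N-1) * y 0 else 0) := by
          intro j _
          split_ifs with hj0
          · subst hj0
            simp only [h2, true_and]
            rw [Finset.sum_ite_eq' (range N) (N-1) (fun i => y i * y 0), if_pos hN1]
          · exact Finset.sum_eq_zero fun i hi => by rw [if_neg (by tauto)]
        rw [Finset.sum_congr rfl inner,
          Finset.sum_ite_eq' (range N) 0 (fun _ => y (N-1) * y 0), if_pos h0]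
        ring
      · exact Finset.sum_eq_zero fun j _ => Finset.sum_eq_zero fun i _ => by
          rw [if_neg (by tauto)]
    rw [T1, T2, T3, T4, T5]
    split_ifs <;> ring
  -- abbreviations
  set A : ℤ := ∑ i ∈ range N, y i * y i with hA
  set B : ℤ := ∑ i ∈ range (N-1), y i * y (i+1) with hB
  set Ssum : ℤ := ∑ k ∈ range (N-1), (y k - y (k+1))^2 with hSsum
  set E : ℤ := if 2 < N then (y 0 + y (N-1))^2 else (y 0)^2 + (y 1)^2 with hE
  set S : ℤ := Ssum + E with hS
  clear_value A B Ssum E S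
  -- sum identities
  have hM : N - 1 + 1 = N := by omega
  have hsq1 : ∑ k ∈ range (N-1), y k * y k = A - y (N-1) * y (N-1) := by
    have e := Finset.sum_range_succ (fun i => y i * y i) (N-1)
    rw [hM] at e
    rw [hA, e]
    ring
  have hsq2 : ∑ k ∈ range (N-1), y (k+1) * y (k+1) = A - y 0 * y 0 := by
    have e := Finset.sum_range_succ' (fun i => y i * y i) (N-1)
    rw [hM] at e
    rw [hA, e]
    ring
  have hSsum_eq : Ssum = (∑ k ∈ range (N-1), y k * y k)
      + (∑ k ∈ range (N-1), y (k+1) * y (k+1)) - 2 * B := by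
    rw [hSsum, hB, Finset.mul_sum, ← Finset.sum_add_distrib, ← Finset.sum_sub_distrib]
    exact Finset.sum_congr rfl fun k _ => by ring
  -- S in closed form
  have hSval : S = 2 * A - 2 * B + (if 2 < N then 2 * (y 0 * y (N-1)) else 0) := by
    rw [hS, hE, hSsum_eq, hsq1, hsq2]
    split_ifs with h2
    · ring
    · -- N = 2
      have hN2 : N = 2 := by omega
      subst hN2
      simp only [show (2:ℕ) - 1 = 1 from rfl]
      ring
  -- Q(x) ≥ S
  have hQS : S ≤ x ⬝ᵥ Q.mulVec x := by
    rw [key, hSval]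
    have hle : 2 * A ≤ ∑ i ∈ range N, d i * (y i * y i) := by
      rw [hA, Finset.mul_sum]
      refine Finset.sum_le_sum fun i hi => ?_
      have hdi : 2 ≤ d i := by
        rw [hd]
        rcases Nat.lt_or_ge i N with h | h
        · simp only [dif_pos h]; exact hc _
        · simp [Nat.not_lt.mpr h]
      exact mul_le_mul_of_nonneg_right hdi (mul_self_nonneg _)
    linarith
  -- S is even
  obtain ⟨m, hm⟩ : ∃ m, S = 2 * m := by
    refine ⟨A - B + (if 2 < N then y 0 * y (N-1) else 0), ?_⟩
    rw [hSval]; split_ifs <;> ring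
  -- S ≥ 0
  have hSnn : 0 ≤ S := by
    have h1 : 0 ≤ Ssum := by
      rw [hSsum]; exact Finset.sum_nonneg fun k _ => sq_nonneg _
    have h2 : 0 ≤ E := by
      rw [hE]; split_ifs
      · exact sq_nonneg _
      · positivity
    rw [hS]; linarith
  -- S ≠ 0
  have hSne : S ≠ 0 := by
    intro hS0
    have h1 : 0 ≤ Ssum := by
      rw [hSsum]; exact Finset.sum_nonneg fun k _ => sq_nonneg _
    have h2 : 0 ≤ E := by
      rw [hE]; split_ifs
      · exact sq_nonneg _
      · positivity
    have hSsum0 : Ssum = 0 := by rw [hS] at hS0; linarith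
    have hE0 : E = 0 := by rw [hS] at hS0; linarith
    rw [hSsum] at hSsum0
    have hstep : ∀ k, k < N - 1 → y k = y (k+1) := by
      intro k hk
      have := (Finset.sum_eq_zero_iff_of_nonneg (fun k _ => sq_nonneg (y k - y (k+1)))).mp
        hSsum0 k (Finset.mem_range.mpr hk)
      have h := pow_eq_zero_iff (n := 2) (by norm_num) |>.mp this
      linarith [sub_eq_zero.mp h]
    have hconst : ∀ k, k < N → y k = y 0 := by
      intro k
      induction k with
      | zero => intro _; rfl
      | succ n ih =>
        intro hk
        rw [← hstep n (by omega)]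
        exact ih (by omega)
    have hy0 : y 0 = 0 := by
      rw [hE] at hE0
      split_ifs at hE0 with h2
      · have hc1 : y (N-1) = y 0 := hconst (N-1) (by omega)
        have : (y 0 + y (N-1)) = 0 := by
          have := pow_eq_zero_iff (n := 2) (by norm_num) |>.mp hE0
          exact this
        rw [hc1] at this
        linarith
      · have h0 : y 0 ^ 2 = 0 := by
          have := sq_nonneg (y 0)
          have := sq_nonneg (y 1)
          linarith
        exact pow_eq_zero_iff (n := 2) (by norm_num) |>.mp h0
    apply hx
    funext i
    have : y (i : ℕ) = 0 := by rw [hconst (i : ℕ) i.isLt, hy0]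
    simpa [hy, i.isLt] using this
  -- conclude
  have hmpos : 0 < m := by
    rcases lt_or_ge 0 m with h | h
    · exact h
    · exact absurd (le_antisymm (by linarith) hSnn) hSne
  linarith
end

section
/- In the group G = ⟨x, y | xyx = yxy⟩, define φ = x^{-1} y^{-1} x^{-1}. Then for integers a_1, …, a_n, b_1, …, b_n, setting (c_1,…,c_N) = (a_1+2, 2,…,2 (b_1−1 times), …, a_n+2, 2,…,2 (b_n−1 times)), the element x^{c_1} φ x^{c_2} φ ⋯ x^{c_N} φ^{-1} is conjugate in G to (xy)^3 x^{a_1} y^{-b_1} ⋯ x^{a_n} y^{-b_n}. -/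
/-- The tuple `(c_1,…,c_N) = (a_1+2, 2^{b_1-1}, …, a_n+2, 2^{b_n-1})`
associated to exponents `a : Fin n → ℤ` and `b : Fin n → ℕ`. -/
def cTuple (n : ℕ) (a : Fin n → ℤ) (b : Fin n → ℕ) : List ℤ :=
  (List.ofFn fun i => (a i + 2) :: List.replicate (b i - 1) 2).flatten

private lemma conj_list_prod {G : Type*} [Group G] (g : G) (l : List G) :
    (l.map fun d => g * d * g⁻¹).prod = g * l.prod * g⁻¹ := by
  induction l with
  | nil => simp
  | cons a t ih => simp only [List.map_cons, List.prod_cons, ih]; group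

/-- In any group with the braid relation, with `φ = x⁻¹y⁻¹x⁻¹`, the word
`x^{c_1} φ x^{c_2} φ ⋯ x^{c_N} φ⁻¹` built from the tuple
`(c_1,…,c_N) = (a_1+2, 2^{b_1-1}, …, a_n+2, 2^{b_n-1})` is conjugate to
`(xy)³ x^{a_1} y^{-b_1} ⋯ x^{a_n} y^{-b_n}`. -/
theorem stmt13 {G : Type*} [Group G] (x y : G) (h : x * y * x = y * x * y)
    (n : ℕ) (hn : 1 ≤ n) (a : Fin n → ℤ) (b : Fin n → ℕ) (hb : ∀ i, 1 ≤ b i) :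
    ∃ g : G,
      g * (((cTuple n a b).map fun c =>
          x ^ c * (x⁻¹ * y⁻¹ * x⁻¹)).prod * (x⁻¹ * y⁻¹ * x⁻¹)⁻¹ *
          (x⁻¹ * y⁻¹ * x⁻¹)⁻¹) * g⁻¹ =
        (x * y) ^ 3 *
          (List.ofFn fun i => x ^ (a i) * y ^ (-(b i : ℤ))).prod := by
  -- abbreviations
  set D : G := (List.ofFn fun i => x ^ (a i) * y ^ (-(b i : ℤ))).prod with hD
  -- Δ = xyx, basic braid consequences
  have hΔx' : (x*y*x)*x = y*(x*y*x) := by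
    conv_lhs => rw [h]
    simp only [mul_assoc]
  have hΔy : (x*y*x)*y = x*(x*y*x) := by
    conv_rhs => rw [h]
    simp only [mul_assoc]
  have hc2x : Commute ((x*y*x)*(x*y*x)) x := by
    show ((x*y*x)*(x*y*x))*x = x*((x*y*x)*(x*y*x))
    calc ((x*y*x)*(x*y*x))*x = (x*y*x)*((x*y*x)*x) := by group
      _ = ((x*y*x)*y)*(x*y*x) := by rw [hΔx']; group
      _ = x*((x*y*x)*(x*y*x)) := by rw [hΔy]; group
  have hc2y : Commute ((x*y*x)*(x*y*x)) y := by
    show ((x*y*x)*(x*y*x))*y = y*((x*y*x)*(x*y*x))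
    calc ((x*y*x)*(x*y*x))*y = (x*y*x)*((x*y*x)*y) := by group
      _ = ((x*y*x)*x)*(x*y*x) := by rw [hΔy]; group
      _ = y*((x*y*x)*(x*y*x)) := by rw [hΔx']; group
  have hΔsq : (x*y*x)*(x*y*x) = (x*y)^3 := by
    nth_rewrite 2 [h]
    simp only [pow_succ, pow_zero, one_mul, mul_assoc]
  -- the product over the tuple is  x * D * x⁻¹
  have hblock : ∀ i : Fin n,
      (((a i + 2) :: List.replicate (b i - 1) 2).map
        fun c => x ^ c * (x⁻¹ * y⁻¹ * x⁻¹)).prod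
        = x * (x ^ (a i) * y ^ (-(b i : ℤ))) * x⁻¹ := by
    intro i
    obtain ⟨k, hk⟩ : ∃ k, b i = k + 1 := ⟨b i - 1, (Nat.succ_pred_eq_of_pos (hb i)).symm⟩
    rw [List.map_cons, List.prod_cons, List.map_replicate, List.prod_replicate, hk]
    have h2 : x ^ (2:ℤ) * (x⁻¹ * y⁻¹ * x⁻¹) = x * y⁻¹ * x⁻¹ := by group
    simp only [Nat.add_sub_cancel, h2, conj_pow]
    have hky : y ^ (-((k:ℕ) + 1 : ℤ)) = y⁻¹ * y⁻¹ ^ k := by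
      have : y ^ (-((k:ℕ) + 1 : ℤ)) = (y⁻¹) ^ (k + 1) := by
        rw [show -((k:ℤ) + 1) = -((k+1:ℕ):ℤ) by push_cast; ring, zpow_neg, zpow_natCast,
          ← inv_pow]
      rw [this, pow_succ' (y⁻¹) k]
    push_cast
    rw [hky]
    have hx2 : x ^ (a i + 2) = x ^ (a i) * (x * x) := by
      rw [zpow_add, zpow_two]
    rw [hx2]
    group
  have hprod : ((cTuple n a b).map fun c => x ^ c * (x⁻¹ * y⁻¹ * x⁻¹)).prod
      = x * D * x⁻¹ := by
    rw [cTuple, List.map_flatten, List.prod_flatten, List.map_ofFn, List.map_ofFn]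
    simp only [Function.comp_def]
    have e1 : (fun i : Fin n => (List.map (fun c => x ^ c * (x⁻¹ * y⁻¹ * x⁻¹))
        ((a i + 2) :: List.replicate (b i - 1) 2)).prod)
        = fun i : Fin n => x * (x ^ (a i) * y ^ (-(b i : ℤ))) * x⁻¹ := funext hblock
    rw [e1]
    have e2 : (List.ofFn fun i : Fin n => x * (x ^ (a i) * y ^ (-(b i : ℤ))) * x⁻¹)
        = (List.ofFn fun i : Fin n => x ^ (a i) * y ^ (-(b i : ℤ))).map
            (fun d => x * d * x⁻¹) := by rw [List.map_ofFn]; rfl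
    rw [e2, conj_list_prod]
  -- commutation of (xy)^3 with D
  have hCx : Commute ((x*y)^3) x := by rw [← hΔsq]; exact hc2x
  have hCy : Commute ((x*y)^3) y := by rw [← hΔsq]; exact hc2y
  have hCD : Commute ((x*y)^3) D := by
    apply Commute.list_prod_right
    intro z hz
    rw [List.mem_ofFn] at hz
    obtain ⟨i, rfl⟩ := hz
    exact (hCx.zpow_right _).mul_right (hCy.zpow_right _)
  -- conclude with g = x⁻¹
  refine ⟨x⁻¹, ?_⟩
  rw [hprod]
  have hφ : (x⁻¹ * y⁻¹ * x⁻¹)⁻¹ = x*y*x := by group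
  rw [hφ]
  have hmain : x⁻¹ * (x * D * x⁻¹ * (x*y*x) * (x*y*x)) * x⁻¹⁻¹
      = D * (x⁻¹ * ((x*y*x)*(x*y*x)) * x) := by group
  rw [hmain]
  have hinv : x⁻¹ * ((x*y*x)*(x*y*x)) * x = (x*y*x)*(x*y*x) := by
    rw [mul_assoc, hc2x.eq]; group
  rw [hinv, hΔsq, ← hCD.eq]
end
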